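/- arXiv:2401.08153 — 5 statements merged into one kernel-verified Lean document; each statement's English description precedes it below -/
import Mathlib

section
/- Let f : ℝⁿ → ℝⁿ and φ : ℝⁿ → ℝᴺ with N ≥ n be C¹ maps. Assume (D1) there exists a Schur stable matrix A ∈ ℝ^{N×N} such that φ(f(x)) = A φ(x) for all x ∈ ℝⁿ, and (D2) the Jacobian matrix Dφ(x) ∈ ℝ^{N×n} has full column rank n for every x and there are constants a₂ ≥ a₁ > 0 with a₁ I ≼ Dφ(x)ᵀ Dφ(x) ≼ a₂ I for all x. Then there exist a symmetric positive definite matrix P ∈ ℝ^{N×N} and a constant β ∈ (0,1) such that, setting M(x) := Dφ(x)ᵀ P Dφ(x), the inequality Df(x)ᵀ M(f(x)) Df(x) − M(x) ≼ −β M(x) holds for all x ∈ ℝⁿ; i.e., the system x_{t+1} = f(x_t) is contracting with metric M. -/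
open Matrix

/-- A real square matrix is Schur stable if every complex eigenvalue has modulus < 1. -/
def SchurStable {N : ℕ} (A : Matrix (Fin N) (Fin N) ℝ) : Prop :=
  ∀ μ ∈ spectrum ℂ (A.map Complex.ofReal), ‖μ‖ < 1

/-- Jacobian matrix of a map between finite-dimensional real coordinate spaces. -/
noncomputable def jac {n m : ℕ} (f : (Fin n → ℝ) → (Fin m → ℝ)) (x : Fin n → ℝ) :
    Matrix (Fin m) (Fin n) ℝ :=
  LinearMap.toMatrix' (fderiv ℝ f x).toLinearMap

/-!
Since `A` is Schur stable, Gelfand's formula gives `k ≥ 1` with `‖Aᵏ‖ < 1` (operator norm of the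
complexification). The truncated Gramian `P = ∑_{j<k} (Aʲ)ᵀ Aʲ` satisfies
`Aᵀ P A = P - 1 + (Aᵏ)ᵀ Aᵏ ≼ P - (1 - ‖Aᵏ‖²) • 1` and `1 ≼ P ≼ (∑_{j<k} ‖Aʲ‖²) • 1`,
so `Aᵀ P A ≼ (1 - β) P` for a small `β > 0`. Differentiating `φ ∘ f = A φ` gives
`Dφ(f x) Df(x) = A Dφ(x)`, and conjugating the Lyapunov inequality by `Dφ(x)` yields the
contraction inequality for `M(x) = Dφ(x)ᵀ P Dφ(x)`.
-/

open Filter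
open scoped Matrix.Norms.L2Operator MatrixOrder

theorem jac_comp {l m n : ℕ} {g : (Fin m → ℝ) → (Fin l → ℝ)} {f : (Fin n → ℝ) → (Fin m → ℝ)}
    {x : Fin n → ℝ} (hg : DifferentiableAt ℝ g (f x)) (hf : DifferentiableAt ℝ f x) :
    jac (g ∘ f) x = jac g (f x) * jac f x := by
  rw [jac, fderiv_comp x hg hf, ContinuousLinearMap.toLinearMap_comp, LinearMap.toMatrix'_comp]
  rfl

theorem jac_mulVec {m n : ℕ} (A : Matrix (Fin m) (Fin n) ℝ) (x : Fin n → ℝ) :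
    jac (A *ᵥ ·) x = A := by
  have h : fderiv ℝ (A *ᵥ ·) x = A.mulVecLin.toContinuousLinearMap :=
    A.mulVecLin.toContinuousLinearMap.fderiv
  rw [jac, h]
  exact LinearMap.toMatrix'_toLin' A

theorem jac_mul_jac_of_comp_eq_mulVec {n N : ℕ} {f : (Fin n → ℝ) → (Fin n → ℝ)}
    {φ : (Fin n → ℝ) → (Fin N → ℝ)} (hf : Differentiable ℝ f) (hφ : Differentiable ℝ φ)
    {A : Matrix (Fin N) (Fin N) ℝ} (h : ∀ x, φ (f x) = A *ᵥ φ x) (x : Fin n → ℝ) :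
    jac φ (f x) * jac f x = A * jac φ x := by
  have hcomp : φ ∘ f = (A *ᵥ ·) ∘ φ := funext h
  rw [← jac_comp (hφ _) (hf x), hcomp,
    jac_comp (g := (A *ᵥ ·)) A.mulVecLin.toContinuousLinearMap.differentiableAt (hφ x), jac_mulVec]

theorem SchurStable.spectralRadius_lt_one {N : ℕ} {A : Matrix (Fin N) (Fin N) ℝ}
    (hA : SchurStable A) : spectralRadius ℂ (A.map Complex.ofReal) < 1 := by
  rcases subsingleton_or_nontrivial (Matrix (Fin N) (Fin N) ℂ) with _ | _
  · simp [spectrum.SpectralRadius.of_subsingleton]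
  · exact_mod_cast spectrum.spectralRadius_lt_of_forall_lt _ fun z hz => by exact_mod_cast hA z hz

theorem eventually_norm_pow_lt_one_of_spectralRadius_lt_one {E : Type*} [NormedRing E]
    [NormedAlgebra ℂ E] [CompleteSpace E] {a : E} (ha : spectralRadius ℂ a < 1) :
    ∀ᶠ k : ℕ in atTop, ‖a ^ k‖ < 1 := by
  filter_upwards
    [(spectrum.pow_nnnorm_pow_one_div_tendsto_nhds_spectralRadius a).eventually_lt_const ha,
    eventually_ge_atTop 1] with k hk hk1
  have hk0 : (0 : ℝ) < 1 / k := one_div_pos.mpr (by exact_mod_cast hk1)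
  rw [← ENNReal.one_rpow (1 / (k : ℝ)), ENNReal.rpow_lt_rpow_iff hk0] at hk
  exact_mod_cast hk

theorem norm_sq_toLp_ofReal {n : ℕ} (u : Fin n → ℝ) :
    ‖WithLp.toLp 2 (Complex.ofReal ∘ u)‖ ^ 2 = u ⬝ᵥ u := by
  rw [EuclideanSpace.norm_sq_eq]
  simp [dotProduct, sq]

theorem dotProduct_mulVec_self_le_norm_map_sq {m n : ℕ} (B : Matrix (Fin m) (Fin n) ℝ)
    (v : Fin n → ℝ) :
    B *ᵥ v ⬝ᵥ B *ᵥ v ≤ ‖B.map Complex.ofReal‖ ^ 2 * (v ⬝ᵥ v) := by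
  have h := (B.map Complex.ofReal).l2_opNorm_mulVec (WithLp.toLp 2 (Complex.ofReal ∘ v))
  rw [← norm_sq_toLp_ofReal, ← norm_sq_toLp_ofReal, ← mul_pow]
  have hmap : B.map Complex.ofReal *ᵥ (Complex.ofReal ∘ v) = Complex.ofReal ∘ (B *ᵥ v) := by
    ext i; exact (RingHom.map_mulVec Complex.ofRealHom B v i).symm
  simp only [hmap] at h
  exact pow_le_pow_left₀ (norm_nonneg _) h 2

theorem transpose_mul_self_le_norm_map_sq_smul_one {m n : ℕ} (B : Matrix (Fin m) (Fin n) ℝ) :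
    Bᵀ * B ≤ ‖B.map Complex.ofReal‖ ^ 2 • (1 : Matrix (Fin n) (Fin n) ℝ) := by
  refine Matrix.le_iff.mpr (.of_dotProduct_mulVec_nonneg ?_ fun v => ?_)
  · simp [IsHermitian, transpose_sub]
  · have hq : v ⬝ᵥ (Bᵀ * B) *ᵥ v = B *ᵥ v ⬝ᵥ B *ᵥ v := by
      rw [← mulVec_mulVec, dotProduct_mulVec, vecMul_transpose]
    rw [star_trivial, sub_mulVec, dotProduct_sub, hq, smul_mulVec, one_mulVec, dotProduct_smul,
      smul_eq_mul, sub_nonneg]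
    exact dotProduct_mulVec_self_le_norm_map_sq B v

theorem map_ofReal_pow {N : ℕ} (A : Matrix (Fin N) (Fin N) ℝ) (k : ℕ) :
    (A ^ k).map Complex.ofReal = A.map Complex.ofReal ^ k :=
  map_pow Complex.ofRealHom.mapMatrix A k

noncomputable def lyapunovSum {N : ℕ} (A : Matrix (Fin N) (Fin N) ℝ) (k : ℕ) :
    Matrix (Fin N) (Fin N) ℝ :=
  ∑ j ∈ Finset.range k, (A ^ j)ᵀ * A ^ j

theorem transpose_mul_lyapunovSum_mul {N : ℕ} (A : Matrix (Fin N) (Fin N) ℝ) (k : ℕ) :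
    Aᵀ * lyapunovSum A k * A + 1 = lyapunovSum A k + (A ^ k)ᵀ * A ^ k := by
  induction k with
  | zero => simp [lyapunovSum]
  | succ k ih =>
    simp only [lyapunovSum, Finset.sum_range_succ] at ih ⊢
    rw [mul_add, add_mul, add_right_comm, ih, pow_succ, transpose_mul]
    simp only [Matrix.mul_assoc]

theorem posDef_lyapunovSum {N : ℕ} (A : Matrix (Fin N) (Fin N) ℝ) {k : ℕ} (hk : k ≠ 0) :
    (lyapunovSum A k).PosDef := by
  obtain ⟨k, rfl⟩ := Nat.exists_eq_succ_of_ne_zero hk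
  rw [lyapunovSum, Finset.sum_range_succ', pow_zero, transpose_one, one_mul]
  exact PosDef.posSemidef_add
    (posSemidef_sum _ fun j _ => posSemidef_conjTranspose_mul_self (A ^ (j + 1))) PosDef.one

theorem lyapunovSum_le {N : ℕ} (A : Matrix (Fin N) (Fin N) ℝ) (k : ℕ) :
    lyapunovSum A k ≤ (∑ j ∈ Finset.range k, ‖(A.map Complex.ofReal) ^ j‖ ^ 2) • 1 := by
  rw [lyapunovSum, Finset.sum_smul]
  refine Finset.sum_le_sum fun j _ => ?_
  simpa [map_ofReal_pow] using transpose_mul_self_le_norm_map_sq_smul_one (A ^ j)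

theorem SchurStable.exists_lyapunov {N : ℕ} {A : Matrix (Fin N) (Fin N) ℝ} (hA : SchurStable A) :
    ∃ (P : Matrix (Fin N) (Fin N) ℝ) (β : ℝ), P.PosDef ∧ 0 < β ∧ β < 1 ∧
      ((1 - β) • P - Aᵀ * P * A).PosSemidef := by
  obtain ⟨k, hk, hk0⟩ := ((eventually_norm_pow_lt_one_of_spectralRadius_lt_one
    hA.spectralRadius_lt_one).and (eventually_ne_atTop 0)).exists
  set ρ := ‖A.map Complex.ofReal ^ k‖
  set c := ∑ j ∈ Finset.range k, ‖A.map Complex.ofReal ^ j‖ ^ 2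
  have hc : 0 ≤ c := by positivity
  have hρ : ρ ^ 2 < 1 := pow_lt_one₀ (norm_nonneg _) hk two_ne_zero
  set β := (1 - ρ ^ 2) / (c + 2)
  have hβ0 : 0 < β := div_pos (by linarith) (by linarith)
  have hβc : β * (c + 2) = 1 - ρ ^ 2 := div_mul_cancel₀ _ (by linarith)
  clear_value β
  refine ⟨lyapunovSum A k, β, posDef_lyapunovSum A hk0, hβ0, by nlinarith, ?_⟩
  have hAk := le_iff.mp (transpose_mul_self_le_norm_map_sq_smul_one (A ^ k))
  rw [map_ofReal_pow] at hAk
  have hS := le_iff.mp (lyapunovSum_le A k)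
  have hsplit : (1 - β) • lyapunovSum A k - Aᵀ * lyapunovSum A k * A =
      (ρ ^ 2 • 1 - (A ^ k)ᵀ * A ^ k) + β • (c • 1 - lyapunovSum A k) + (2 * β) • 1 := by
    rw [eq_sub_of_add_eq (transpose_mul_lyapunovSum_mul A k)]
    linear_combination (norm := module) (-hβc) • (1 : Matrix (Fin N) (Fin N) ℝ)
  rw [hsplit]
  exact (hAk.add (hS.smul hβ0.le)).add (PosSemidef.one.smul (by positivity))

theorem Matrix.PosSemidef.smul_sub_transpose_mul_mul_of_mul_eq {l m n : Type*} [Fintype l]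
    [Fintype m] [Fintype n] {P A : Matrix m m ℝ} {r : ℝ} (h : (r • P - Aᵀ * P * A).PosSemidef)
    {J : Matrix m n ℝ} {G : Matrix m l ℝ} {F : Matrix l n ℝ} (hGF : G * F = A * J) :
    (r • (Jᵀ * P * J) - Fᵀ * (Gᵀ * P * G) * F).PosSemidef := by
  have hpull : Fᵀ * (Gᵀ * P * G) * F = Jᵀ * (Aᵀ * P * A) * J := by
    calc Fᵀ * (Gᵀ * P * G) * F = (G * F)ᵀ * P * (G * F) := by
          simp only [transpose_mul, Matrix.mul_assoc]
      _ = Jᵀ * (Aᵀ * P * A) * J := by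
          simp only [hGF, transpose_mul, Matrix.mul_assoc]
  have hfactor : r • (Jᵀ * P * J) - Jᵀ * (Aᵀ * P * A) * J = Jᵀ * (r • P - Aᵀ * P * A) * J := by
    simp only [Matrix.mul_sub, Matrix.sub_mul, Matrix.mul_smul, Matrix.smul_mul]
  rw [hpull, hfactor]
  simpa using h.conjTranspose_mul_mul_same J

theorem stmt0_general {n N : ℕ}
    (f : (Fin n → ℝ) → (Fin n → ℝ)) (φ : (Fin n → ℝ) → (Fin N → ℝ))
    (hf : ContDiff ℝ 1 f) (hφ : ContDiff ℝ 1 φ)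
    (A : Matrix (Fin N) (Fin N) ℝ) (hA : SchurStable A)
    (hD1 : ∀ x, φ (f x) = A.mulVec (φ x)) :
    ∃ (P : Matrix (Fin N) (Fin N) ℝ) (β : ℝ), P.PosDef ∧ 0 < β ∧ β < 1 ∧
      ∀ x, ((1 - β) • ((jac φ x)ᵀ * P * jac φ x)
          - (jac f x)ᵀ * ((jac φ (f x))ᵀ * P * jac φ (f x)) * jac f x).PosSemidef := by
  obtain ⟨P, β, hP, hβ0, hβ1, hLyap⟩ := hA.exists_lyapunov
  exact ⟨P, β, hP, hβ0, hβ1, fun x => hLyap.smul_sub_transpose_mul_mul_of_mul_eq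
    (jac_mul_jac_of_comp_eq_mulVec (hf.differentiable one_ne_zero) (hφ.differentiable one_ne_zero)
      hD1 x)⟩

theorem stmt0 {n N : ℕ} (hNn : n ≤ N)
    (f : (Fin n → ℝ) → (Fin n → ℝ)) (φ : (Fin n → ℝ) → (Fin N → ℝ))
    (hf : ContDiff ℝ 1 f) (hφ : ContDiff ℝ 1 φ)
    (A : Matrix (Fin N) (Fin N) ℝ) (hA : SchurStable A)
    (hD1 : ∀ x, φ (f x) = A.mulVec (φ x))
    (hrank : ∀ x, (jac φ x).rank = n)
    (a₁ a₂ : ℝ) (ha₁ : 0 < a₁) (ha₁₂ : a₁ ≤ a₂)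
    (hlow : ∀ x, ((jac φ x)ᵀ * jac φ x - a₁ • (1 : Matrix (Fin n) (Fin n) ℝ)).PosSemidef)
    (hup : ∀ x, (a₂ • (1 : Matrix (Fin n) (Fin n) ℝ) - (jac φ x)ᵀ * jac φ x).PosSemidef) :
    ∃ (P : Matrix (Fin N) (Fin N) ℝ) (β : ℝ), P.PosDef ∧ 0 < β ∧ β < 1 ∧
      ∀ x, ((1 - β) • ((jac φ x)ᵀ * P * jac φ x)
          - (jac f x)ᵀ * ((jac φ (f x))ᵀ * P * jac φ (f x)) * jac f x).PosSemidef :=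
  stmt0_general f φ hf hφ A hA hD1
end

section
/- Let A ∈ ℝ^{N×N}, let P ∈ ℝ^{N×N} be symmetric positive definite, and suppose P − Aᵀ P A − ρ I is positive definite for some ρ > 0. Let Φ₁, Φ₂ ∈ ℝ^{N×n} with Φ₁ of full column rank n, and let J ∈ ℝ^{n×n} satisfy Φ₂ J = A Φ₁. Then Φ₁ᵀ P Φ₁ − Jᵀ Φ₂ᵀ P Φ₂ J ≻ ρ Φ₁ᵀ Φ₁ ≽ β Φ₁ᵀ P Φ₁, where β := ρ / λ_max(P) and λ_max(P) denotes the largest eigenvalue of P. -/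
/-!
Substituting `Φ₂ J = A Φ₁` turns the first difference into the congruence
`Φ₁ᵀ (P - Aᵀ P A - ρ I) Φ₁`, which is positive definite because `Φ₁` is injective. The second is
`Φ₁ᵀ ((ρ / λ_max) (λ_max I - P)) Φ₁`, and `λ_max I - P ≽ 0` since the spectrum of `λ_max I - P`
is `λ_max - σ(P) ⊆ [0, ∞)`.
-/

open Matrix
open scoped ComplexOrder Pointwise

namespace Matrix

variable {m n 𝕜 : Type*} [Fintype n]

theorem mulVec_injective_of_rank_eq_card {K : Type*} [Field K] {A : Matrix m n K}
    (hA : A.rank = Fintype.card n) : Function.Injective A.mulVec := by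
  rw [mulVec_injective_iff, linearIndependent_iff_card_eq_finrank_span, ← hA,
    rank_eq_finrank_span_cols, Set.finrank]

variable [DecidableEq n] [RCLike 𝕜]

theorem IsHermitian.posSemidef_iSup_eigenvalues_smul_one_sub {P : Matrix n n 𝕜}
    (hP : P.IsHermitian) : ((⨆ i, hP.eigenvalues i) • (1 : Matrix n n 𝕜) - P).PosSemidef := by
  set c := ⨆ i, hP.eigenvalues i
  have hH : (c • (1 : Matrix n n 𝕜) - P).IsHermitian :=
    (isHermitian_one.smul (IsSelfAdjoint.all c)).sub hP
  rw [hH.posSemidef_iff_eigenvalues_nonneg]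
  intro i
  obtain ⟨_, rfl, _, ⟨j, rfl⟩, hj⟩ : hH.eigenvalues i ∈ {c} - Set.range hP.eigenvalues := by
    rw [← hP.spectrum_real_eq_range_eigenvalues, spectrum.singleton_sub_eq,
      Algebra.algebraMap_eq_smul_one]
    exact hH.eigenvalues_mem_spectrum_real i
  rw [← hj, Pi.zero_apply, sub_nonneg]
  exact le_ciSup (Set.finite_range _).bddAbove j

theorem PosDef.posSemidef_smul_one_sub_div_iSup_eigenvalues_smul {P : Matrix n n 𝕜}
    (hP : P.PosDef) {ρ : ℝ} (hρ : 0 ≤ ρ) :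
    (ρ • (1 : Matrix n n 𝕜) - (ρ / ⨆ i, hP.1.eigenvalues i) • P).PosSemidef := by
  cases isEmpty_or_nonempty n
  -- the supremum is the junk value `0` here, but every matrix is `0`
  · convert PosSemidef.zero
    exact Subsingleton.elim _ _
  set c := ⨆ i, hP.1.eigenvalues i
  have hc : 0 < c :=
    (hP.eigenvalues_pos (Classical.arbitrary n)).trans_le
      (le_ciSup (Set.finite_range _).bddAbove _)
  have h := hP.1.posSemidef_iSup_eigenvalues_smul_one_sub.smul (div_nonneg hρ hc.le)
  rwa [smul_sub, smul_smul, div_mul_cancel₀ _ hc.ne'] at h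

end Matrix

theorem stmt2 {N n : ℕ} (A P : Matrix (Fin N) (Fin N) ℝ) (ρ : ℝ) (hρ : 0 < ρ)
    (hP : P.PosDef)
    (hLyap : (P - Aᵀ * P * A - ρ • (1 : Matrix (Fin N) (Fin N) ℝ)).PosDef)
    (Φ₁ Φ₂ : Matrix (Fin N) (Fin n) ℝ) (hΦ₁ : Φ₁.rank = n)
    (J : Matrix (Fin n) (Fin n) ℝ) (hJ : Φ₂ * J = A * Φ₁) :
    ((Φ₁ᵀ * P * Φ₁ - Jᵀ * Φ₂ᵀ * P * Φ₂ * J) - ρ • (Φ₁ᵀ * Φ₁)).PosDef ∧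
    (ρ • (Φ₁ᵀ * Φ₁) - (ρ / (⨆ i, hP.1.eigenvalues i)) • (Φ₁ᵀ * P * Φ₁)).PosSemidef := by
  have hΦ₁_inj : Function.Injective Φ₁.mulVec :=
    mulVec_injective_of_rank_eq_card (by rwa [Fintype.card_fin])
  have hΦ₂J : Jᵀ * Φ₂ᵀ * P * Φ₂ * J = Φ₁ᵀ * (Aᵀ * P * A) * Φ₁ := by
    simpa only [transpose_mul, Matrix.mul_assoc] using congrArg (fun B ↦ Bᵀ * P * B) hJ
  constructor
  · have h := hLyap.conjTranspose_mul_mul_same hΦ₁_inj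
    simpa only [conjTranspose_eq_transpose_of_trivial, Matrix.mul_sub, Matrix.sub_mul,
      Matrix.mul_smul, Matrix.smul_mul, Matrix.mul_one, hΦ₂J] using h
  · have h := (hP.posSemidef_smul_one_sub_div_iSup_eigenvalues_smul hρ.le)
      |>.conjTranspose_mul_mul_same Φ₁
    simpa only [conjTranspose_eq_transpose_of_trivial, Matrix.mul_sub, Matrix.sub_mul,
      Matrix.mul_smul, Matrix.smul_mul, Matrix.mul_one] using h
end

section
/- Let f : ℝⁿ → ℝⁿ be a bijection whose inverse f⁻¹ is continuous and satisfies |f⁻¹(y)| ≤ c₁ + c₂|y| for all y and some constants c₁, c₂ > 0. Let H : ℝⁿ → ℝᴺ be continuous with |H(x)| ≤ L_H (1 + |x|) for all x and some L_H > 0, and let A ∈ ℝ^{N×N} have operator norm ‖A‖ ≤ ρ with ρ < min{1, c₂⁻¹}. Then for every x ∈ ℝⁿ the series T(x) := Σ_{j=0}^{∞} Aʲ H(f^{−(j+1)}(x)) converges absolutely, and the resulting map T : ℝⁿ → ℝᴺ satisfies the functional equation T(f(x)) = A T(x) + H(x) for all x ∈ ℝⁿ. -/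
/-!
Since `g` inverts `f`, the `(j + 1)`-th term of the series at `f x` is `A` applied to the `j`-th
term at `x`, and its zeroth term is `H x`; this is the functional equation once the series
converges. For convergence, the affine bound on `g` gives `‖g^[j] x‖ ≤ K ^ j * (‖x‖ + j * c₁)`
with `K = max 1 c₂`, so the `j`-th term is at most `(α + β * j) * (ρ * K) ^ j`, and
`ρ < min 1 c₂⁻¹` says exactly that `ρ * K < 1`.
-/

open Function

lemma mul_max_one_lt_one_of_lt_min_inv {ρ c : ℝ} (hρ₀ : 0 ≤ ρ) (hρ : ρ < min 1 c⁻¹) :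
    ρ * max 1 c < 1 := by
  rw [mul_max_of_nonneg _ _ hρ₀, mul_one]
  refine max_lt (hρ.trans_le (min_le_left _ _)) ?_
  rcases le_or_gt c 0 with hc | hc
  · exact (mul_nonpos_of_nonneg_of_nonpos hρ₀ hc).trans_lt one_pos
  · calc ρ * c < c⁻¹ * c := by gcongr; exact hρ.trans_le (min_le_right _ _)
      _ = 1 := inv_mul_cancel₀ hc.ne'

lemma summable_affine_mul_geometric {r : ℝ} (hr₀ : 0 ≤ r) (hr : r < 1) (α β : ℝ) :
    Summable fun j : ℕ => (α + β * j) * r ^ j := by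
  have hpow : Summable fun j : ℕ => (j : ℝ) ^ 1 * r ^ j :=
    summable_pow_mul_geometric_of_norm_lt_one 1 (by rwa [Real.norm_of_nonneg hr₀])
  refine ((summable_geometric_of_lt_one hr₀ hr).mul_left α).add (hpow.mul_left β) |>.congr ?_
  intro j
  ring

lemma norm_iterate_le_of_norm_le_affine {E : Type*} [SeminormedAddGroup E] {g : E → E}
    {c₁ c₂ : ℝ} (hg : ∀ y, ‖g y‖ ≤ c₁ + c₂ * ‖y‖) (x : E) (j : ℕ) :
    ‖g^[j] x‖ ≤ max 1 c₂ ^ j * (‖x‖ + j * c₁) := by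
  have hc₁ : 0 ≤ c₁ := by simpa using (norm_nonneg _).trans (hg 0)
  set K := max 1 c₂
  have hK : 1 ≤ K := le_max_left _ _
  induction j with
  | zero => simp
  | succ j ih =>
    rw [iterate_succ_apply']
    calc ‖g (g^[j] x)‖ ≤ c₁ + c₂ * ‖g^[j] x‖ := hg _
      _ ≤ K ^ (j + 1) * c₁ + K * (K ^ j * (‖x‖ + j * c₁)) := by
        gcongr
        · exact le_mul_of_one_le_left hc₁ (one_le_pow₀ hK)
        · exact le_max_right _ _
      _ = K ^ (j + 1) * (‖x‖ + ↑(j + 1) * c₁) := by push_cast; ring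

section Operators

variable {𝕜 F : Type*} [NontriviallyNormedField 𝕜] [SeminormedAddCommGroup F]
  [NormedSpace 𝕜 F] {T : F →L[𝕜] F} {ρ : ℝ}

lemma ContinuousLinearMap.norm_pow_apply_le (hT : ‖T‖ ≤ ρ) (j : ℕ) (v : F) :
    ‖(T ^ j) v‖ ≤ ρ ^ j * ‖v‖ := by
  have hρ₀ : 0 ≤ ρ := (norm_nonneg _).trans hT
  induction j with
  | zero => simp
  | succ j ih =>
    calc ‖(T ^ (j + 1)) v‖ = ‖T ((T ^ j) v)‖ := by rw [pow_succ', mul_apply_eq_comp]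
      _ ≤ ρ * (ρ ^ j * ‖v‖) := (T.le_opNorm _).trans (by gcongr)
      _ = ρ ^ (j + 1) * ‖v‖ := by ring

lemma summable_norm_pow_apply_of_norm_le_geometric {v : ℕ → F} {K α β : ℝ} (hK : 0 ≤ K)
    (hv : ∀ j, ‖v j‖ ≤ K ^ j * (α + β * j)) (hT : ‖T‖ ≤ ρ) (hρK : ρ * K < 1) :
    Summable fun j => ‖(T ^ j) (v j)‖ := by
  have hρ₀ : 0 ≤ ρ := (norm_nonneg _).trans hT
  refine (summable_affine_mul_geometric (by positivity) hρK α β).of_nonneg_of_le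
    (fun j => norm_nonneg _) fun j => ?_
  calc ‖(T ^ j) (v j)‖ ≤ ρ ^ j * ‖v j‖ := T.norm_pow_apply_le hT j (v j)
    _ ≤ ρ ^ j * (K ^ j * (α + β * j)) := by gcongr; exact hv j
    _ = (α + β * j) * (ρ * K) ^ j := by ring

lemma summable_norm_pow_apply_comp_iterate {E : Type*} [SeminormedAddGroup E] {g : E → E}
    {c₁ c₂ : ℝ} (hg : ∀ y, ‖g y‖ ≤ c₁ + c₂ * ‖y‖) {h : E → F} {L : ℝ}
    (hh : ∀ x, ‖h x‖ ≤ L * (1 + ‖x‖)) (hT : ‖T‖ ≤ ρ) (hρ : ρ * max 1 c₂ < 1) (x : E) :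
    Summable fun j => ‖(T ^ j) (h (g^[j + 1] x))‖ := by
  have hL : 0 ≤ L := by simpa using (norm_nonneg _).trans (hh 0)
  set K := max 1 c₂
  have hK : 1 ≤ K := le_max_left _ _
  refine summable_norm_pow_apply_of_norm_le_geometric (zero_le_one.trans hK)
    (α := L * K * (1 + ‖x‖ + c₁)) (β := L * K * c₁) (fun j => ?_) hT hρ
  calc ‖h (g^[j + 1] x)‖ ≤ L * (1 + ‖g^[j + 1] x‖) := hh _
    _ ≤ L * (K ^ (j + 1) + K ^ (j + 1) * (‖x‖ + ↑(j + 1) * c₁)) := by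
      gcongr
      · exact one_le_pow₀ hK
      · exact norm_iterate_le_of_norm_le_affine hg x (j + 1)
    _ = K ^ j * (L * K * (1 + ‖x‖ + c₁) + L * K * c₁ * j) := by push_cast; ring

end Operators

lemma tsum_pow_apply_comp_iterate_of_leftInverse {α R M : Type*} [Semiring R]
    [AddCommMonoid M] [TopologicalSpace M] [Module R M] [ContinuousAdd M] [T2Space M]
    {f g : α → α} (hgf : LeftInverse g f) (T : M →L[R] M) (h : α → M) (x : α)
    (hs : Summable fun j => (T ^ j) (h (g^[j + 1] x))) :
    ∑' j, (T ^ j) (h (g^[j + 1] (f x))) = T (∑' j, (T ^ j) (h (g^[j + 1] x))) + h x := by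
  have hiter (j : ℕ) : g^[j + 1] (f x) = g^[j] x := by rw [iterate_succ_apply, hgf x]
  have hshift (j : ℕ) : (T ^ (j + 1)) (h (g^[j + 1] x)) = T ((T ^ j) (h (g^[j + 1] x))) := by
    rw [pow_succ', mul_apply_eq_comp]
  have hs' : Summable fun j => (T ^ (j + 1)) (h (g^[j + 1] x)) := by
    simpa only [hshift] using T.summable hs
  rw [tsum_congr fun j => by rw [hiter],
    tsum_eq_zero_add' (f := fun j => (T ^ j) (h (g^[j] x))) hs', T.map_tsum hs, add_comm]
  simp only [pow_zero, iterate_zero_apply, hshift, one_apply_eq_self]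

open Matrix

theorem stmt5_general {n N : ℕ}
    (f g : EuclideanSpace ℝ (Fin n) → EuclideanSpace ℝ (Fin n))
    (hgl : Function.LeftInverse g f)
    (c₁ c₂ : ℝ)
    (hginv : ∀ y, ‖g y‖ ≤ c₁ + c₂ * ‖y‖)
    (H : EuclideanSpace ℝ (Fin n) → EuclideanSpace ℝ (Fin N))
    (LH : ℝ)
    (hH : ∀ x, ‖H x‖ ≤ LH * (1 + ‖x‖))
    (A : Matrix (Fin N) (Fin N) ℝ) (ρ : ℝ)
    (hA : ‖Matrix.toEuclideanCLM (𝕜 := ℝ) A‖ ≤ ρ) (hρ : ρ < min 1 c₂⁻¹) :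
    (∀ x, Summable fun j : ℕ =>
        ‖Matrix.toEuclideanCLM (𝕜 := ℝ) (A ^ j) (H (g^[j + 1] x))‖) ∧
    (∀ x, (∑' j : ℕ, Matrix.toEuclideanCLM (𝕜 := ℝ) (A ^ j) (H (g^[j + 1] (f x))))
        = Matrix.toEuclideanCLM (𝕜 := ℝ) A
            (∑' j : ℕ, Matrix.toEuclideanCLM (𝕜 := ℝ) (A ^ j) (H (g^[j + 1] x))) + H x) := by
  have hρK : ρ * max 1 c₂ < 1 := mul_max_one_lt_one_of_lt_min_inv ((norm_nonneg _).trans hA) hρ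
  have hsummable (x : EuclideanSpace ℝ (Fin n)) :=
    summable_norm_pow_apply_comp_iterate hginv hH hA hρK x
  simp only [map_pow] at hsummable ⊢
  exact ⟨hsummable, fun x =>
    tsum_pow_apply_comp_iterate_of_leftInverse hgl _ H x (hsummable x).of_norm⟩

theorem stmt5 {n N : ℕ}
    (f g : EuclideanSpace ℝ (Fin n) → EuclideanSpace ℝ (Fin n))
    (hbij : Function.Bijective f)
    (hgl : Function.LeftInverse g f) (hgr : Function.RightInverse g f)
    (hgc : Continuous g)
    (c₁ c₂ : ℝ) (hc₁ : 0 < c₁) (hc₂ : 0 < c₂)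
    (hginv : ∀ y, ‖g y‖ ≤ c₁ + c₂ * ‖y‖)
    (H : EuclideanSpace ℝ (Fin n) → EuclideanSpace ℝ (Fin N))
    (hHc : Continuous H) (LH : ℝ) (hLH : 0 < LH)
    (hH : ∀ x, ‖H x‖ ≤ LH * (1 + ‖x‖))
    (A : Matrix (Fin N) (Fin N) ℝ) (ρ : ℝ)
    (hA : ‖Matrix.toEuclideanCLM (𝕜 := ℝ) A‖ ≤ ρ) (hρ : ρ < min 1 c₂⁻¹) :
    (∀ x, Summable fun j : ℕ =>
        ‖Matrix.toEuclideanCLM (𝕜 := ℝ) (A ^ j) (H (g^[j + 1] x))‖) ∧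
    (∀ x, (∑' j : ℕ, Matrix.toEuclideanCLM (𝕜 := ℝ) (A ^ j) (H (g^[j + 1] (f x))))
        = Matrix.toEuclideanCLM (𝕜 := ℝ) A
            (∑' j : ℕ, Matrix.toEuclideanCLM (𝕜 := ℝ) (A ^ j) (H (g^[j + 1] x))) + H x) :=
  stmt5_general f g hgl c₁ c₂ hginv H LH hH A ρ hA hρ
end

section
/- Let L ∈ ℝ^{2N×2N}, R ∈ ℝ^{N×N}, and ε > 0, and set M := L Lᵀ + ε I ∈ ℝ^{2N×2N} with N×N blocks M₁₁, M₁₂, M₂₁, M₂₂ (so M = [[M₁₁, M₁₂],[M₂₁, M₂₂]]). Then the matrix M₁₁ + M₂₂ + R − Rᵀ is invertible, and the matrix A(L,R) := 2 (M₁₁ + M₂₂ + R − Rᵀ)⁻¹ M₂₁ is Schur stable. -/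
/-!
The matrix `M` is positive definite, also as a complex matrix. For a nonzero `v : Fin N → ℂ` put
`a = v* M₁₁ v`, `d = v* M₂₂ v`, `c = v* M₂₁ v`. Testing `M` at `(v, t v)` with `|t| = 1` chosen
so that `t̄ c = -|c|` gives `2|c| < a + d`. Since `R - Rᵀ` is skew, its form is purely imaginary,
so `p = v* (M₁₁ + M₂₂ + R - Rᵀ) v` has `Re p = a + d > 2|c| ≥ 0`; in particular the matrix is
invertible. If `v` is an eigenvector of `2 (M₁₁ + M₂₂ + R - Rᵀ)⁻¹ M₂₁` for `μ`, then `2c = μ p`,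
hence `|μ| |p| = 2|c| < Re p ≤ |p|`.
-/

open Matrix

open scoped ComplexOrder

namespace Matrix

variable {m n 𝕜 : Type*} [RCLike 𝕜]

theorem star_dotProduct_conjTranspose_mulVec [Fintype n] (A : Matrix n n 𝕜) (v : n → 𝕜) :
    star v ⬝ᵥ Aᴴ *ᵥ v = star (star v ⬝ᵥ A *ᵥ v) := by
  rw [← star_dotProduct, star_mulVec, ← dotProduct_mulVec]

theorem re_star_dotProduct_mulVec_eq_zero_of_conjTranspose_eq_neg [Fintype n]
    {S : Matrix n n 𝕜} (hS : Sᴴ = -S) (v : n → 𝕜) :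
    RCLike.re (star v ⬝ᵥ S *ᵥ v) = 0 := by
  have h := congrArg RCLike.re (star_dotProduct_conjTranspose_mulVec S v)
  rw [hS, neg_mulVec, dotProduct_neg, map_neg, RCLike.star_def, RCLike.conj_re] at h
  linarith

theorem star_sumElim_dotProduct_mulVec_sumElim [Fintype m] [Fintype n]
    (H : Matrix (m ⊕ n) (m ⊕ n) 𝕜) (x : m → 𝕜) (y : n → 𝕜) :
    star (Sum.elim x y) ⬝ᵥ H *ᵥ Sum.elim x y =
      star x ⬝ᵥ H.toBlocks₁₁ *ᵥ x + star x ⬝ᵥ H.toBlocks₁₂ *ᵥ y +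
        star y ⬝ᵥ H.toBlocks₂₁ *ᵥ x + star y ⬝ᵥ H.toBlocks₂₂ *ᵥ y := by
  conv_lhs => rw [← fromBlocks_toBlocks H]
  rw [fromBlocks_mulVec, Function.star_sumElim, sumElim_dotProduct_sumElim, dotProduct_add,
    dotProduct_add, Sum.elim_comp_inl, Sum.elim_comp_inr]
  ring

theorem PosDef.re_star_dotProduct_toBlocks₁₁_mulVec_pos [Fintype m]
    {H : Matrix (m ⊕ n) (m ⊕ n) 𝕜} (hH : H.PosDef) {v : m → 𝕜} (hv : v ≠ 0) :
    0 < RCLike.re (star v ⬝ᵥ H.toBlocks₁₁ *ᵥ v) :=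
  (RCLike.pos_iff.1 ((hH.submatrix Sum.inl_injective).dotProduct_mulVec_pos hv)).1

theorem PosDef.re_star_dotProduct_toBlocks₂₂_mulVec_pos [Fintype n]
    {H : Matrix (m ⊕ n) (m ⊕ n) 𝕜} (hH : H.PosDef) {v : n → 𝕜} (hv : v ≠ 0) :
    0 < RCLike.re (star v ⬝ᵥ H.toBlocks₂₂ *ᵥ v) :=
  (RCLike.pos_iff.1 ((hH.submatrix Sum.inr_injective).dotProduct_mulVec_pos hv)).1

theorem PosDef.two_mul_norm_star_dotProduct_toBlocks₂₁_mulVec_lt [Fintype m]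
    {H : Matrix (m ⊕ m) (m ⊕ m) 𝕜} (hH : H.PosDef) {v : m → 𝕜} (hv : v ≠ 0) :
    2 * ‖star v ⬝ᵥ H.toBlocks₂₁ *ᵥ v‖ <
      RCLike.re (star v ⬝ᵥ H.toBlocks₁₁ *ᵥ v) + RCLike.re (star v ⬝ᵥ H.toBlocks₂₂ *ᵥ v) := by
  set c := star v ⬝ᵥ H.toBlocks₂₁ *ᵥ v with hc_def
  rcases eq_or_ne c 0 with hc | hc
  · rw [hc, norm_zero, mul_zero]
    exact add_pos (hH.re_star_dotProduct_toBlocks₁₁_mulVec_pos hv)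
      (hH.re_star_dotProduct_toBlocks₂₂_mulVec_pos hv)
  set t : 𝕜 := -(c / ‖c‖)
  have hw : Sum.elim v (t • v) ≠ 0 := fun h => hv (funext fun i => congrFun h (Sum.inl i))
  have hB : H.toBlocks₂₁ᴴ = H.toBlocks₁₂ := by
    rw [← fromBlocks_toBlocks H] at hH
    exact (isHermitian_fromBlocks_iff.1 hH.isHermitian).2.2.1
  have hpos := (RCLike.pos_iff.1 (hH.dotProduct_mulVec_pos hw)).1
  rw [star_sumElim_dotProduct_mulVec_sumElim, ← hB] at hpos
  simp only [mulVec_smul, dotProduct_smul, star_smul, smul_dotProduct,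
    star_dotProduct_conjTranspose_mulVec, smul_eq_mul, ← hc_def] at hpos
  have hn : (‖c‖ : 𝕜) ≠ 0 := by exact_mod_cast norm_ne_zero_iff.2 hc
  have hcc : star c * c = (‖c‖ : 𝕜) ^ 2 := RCLike.conj_mul c
  have hts : star t = -(star c / ‖c‖) := by simp [t, RCLike.star_def]
  have hform : ∀ a d : 𝕜,
      a + t * star c + star t * c + t * (star t * d) = a + d - 2 * ‖c‖ := by
    intro a d
    rw [hts]
    simp only [t]
    field_simp
    linear_combination (d - 2 * ‖c‖) * hcc
  rw [hform] at hpos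
  simpa using hpos

theorem PosDef.two_mul_norm_star_dotProduct_toBlocks₂₁_mulVec_lt_re_add [Fintype m]
    {H : Matrix (m ⊕ m) (m ⊕ m) 𝕜} (hH : H.PosDef) {S : Matrix m m 𝕜} (hS : Sᴴ = -S)
    {v : m → 𝕜} (hv : v ≠ 0) :
    2 * ‖star v ⬝ᵥ H.toBlocks₂₁ *ᵥ v‖ <
      RCLike.re (star v ⬝ᵥ (H.toBlocks₁₁ + H.toBlocks₂₂ + S) *ᵥ v) := by
  rw [add_mulVec, add_mulVec, dotProduct_add, dotProduct_add, map_add, map_add,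
    re_star_dotProduct_mulVec_eq_zero_of_conjTranspose_eq_neg hS, add_zero]
  exact hH.two_mul_norm_star_dotProduct_toBlocks₂₁_mulVec_lt hv

theorem isUnit_of_re_star_dotProduct_mulVec_pos [Fintype n] [DecidableEq n] {P : Matrix n n 𝕜}
    (hP : ∀ v : n → 𝕜, v ≠ 0 → 0 < RCLike.re (star v ⬝ᵥ P *ᵥ v)) : IsUnit P := by
  rw [isUnit_iff_isUnit_det, isUnit_iff_ne_zero]
  intro hdet
  obtain ⟨v, hv, hPv⟩ := exists_mulVec_eq_zero_iff.2 hdet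
  simpa [hPv] using hP v hv

theorem exists_mulVec_eq_smul_of_mem_spectrum [Fintype n] [DecidableEq n] {T : Matrix n n 𝕜}
    {μ : 𝕜} (hμ : μ ∈ spectrum 𝕜 T) : ∃ v : n → 𝕜, v ≠ 0 ∧ T *ᵥ v = μ • v := by
  rw [← spectrum_toLin', ← Module.End.hasEigenvalue_iff_mem_spectrum] at hμ
  obtain ⟨v, hv⟩ := hμ.exists_hasEigenvector
  exact ⟨v, hv.2, by simpa using Module.End.mem_eigenspace_iff.1 hv.1⟩

theorem norm_lt_one_of_mem_spectrum_of_mul_eq_two_smul [Fintype n] [DecidableEq n]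
    {P C T : Matrix n n 𝕜}
    (hPC : ∀ v : n → 𝕜, v ≠ 0 → 2 * ‖star v ⬝ᵥ C *ᵥ v‖ < RCLike.re (star v ⬝ᵥ P *ᵥ v))
    (hPT : P * T = (2 : 𝕜) • C) {μ : 𝕜} (hμ : μ ∈ spectrum 𝕜 T) : ‖μ‖ < 1 := by
  obtain ⟨v, hv, hTv⟩ := exists_mulVec_eq_smul_of_mem_spectrum hμ
  have heq : 2 * (star v ⬝ᵥ C *ᵥ v) = μ * (star v ⬝ᵥ P *ᵥ v) := by
    rw [← smul_eq_mul, ← dotProduct_smul, ← smul_mulVec, ← hPT, ← mulVec_mulVec, hTv,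
      mulVec_smul, dotProduct_smul, smul_eq_mul]
  have hnorm : 2 * ‖star v ⬝ᵥ C *ᵥ v‖ = ‖μ‖ * ‖star v ⬝ᵥ P *ᵥ v‖ := by
    simpa using congrArg norm heq
  have hlt := hPC v hv
  have hre := RCLike.re_le_norm (star v ⬝ᵥ P *ᵥ v)
  by_contra! hμ1
  nlinarith [norm_nonneg (star v ⬝ᵥ P *ᵥ v), norm_nonneg (star v ⬝ᵥ C *ᵥ v)]

theorem PosDef.isUnit_toBlocks₁₁_add_toBlocks₂₂_add [Fintype m] [DecidableEq m]
    {H : Matrix (m ⊕ m) (m ⊕ m) 𝕜} (hH : H.PosDef) {S : Matrix m m 𝕜} (hS : Sᴴ = -S) :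
    IsUnit (H.toBlocks₁₁ + H.toBlocks₂₂ + S) :=
  isUnit_of_re_star_dotProduct_mulVec_pos fun _ hv =>
    (by positivity : (0 : ℝ) ≤ 2 * _).trans_lt
      (hH.two_mul_norm_star_dotProduct_toBlocks₂₁_mulVec_lt_re_add hS hv)

theorem PosDef.norm_lt_one_of_mem_spectrum [Fintype m] [DecidableEq m]
    {H : Matrix (m ⊕ m) (m ⊕ m) 𝕜} (hH : H.PosDef) {S : Matrix m m 𝕜} (hS : Sᴴ = -S)
    {T : Matrix m m 𝕜} (hT : (H.toBlocks₁₁ + H.toBlocks₂₂ + S) * T = (2 : 𝕜) • H.toBlocks₂₁)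
    {μ : 𝕜} (hμ : μ ∈ spectrum 𝕜 T) : ‖μ‖ < 1 :=
  norm_lt_one_of_mem_spectrum_of_mul_eq_two_smul
    (fun _ hv => hH.two_mul_norm_star_dotProduct_toBlocks₂₁_mulVec_lt_re_add hS hv) hT hμ

theorem posDef_mul_conjTranspose_add_smul_one [Fintype m] [DecidableEq m] {k : Type*}
    [Fintype k] (L : Matrix m k 𝕜) {ε : ℝ} (hε : 0 < ε) : (L * Lᴴ + ε • 1).PosDef :=
  PosDef.posSemidef_add (posSemidef_self_mul_conjTranspose L) (PosDef.one.smul hε)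

theorem posDef_mul_transpose_add_smul_one [Fintype m] [DecidableEq m] {k : Type*} [Fintype k]
    (L : Matrix m k ℝ) {ε : ℝ} (hε : 0 < ε) : (L * Lᵀ + ε • 1).PosDef := by
  simpa [conjTranspose_eq_transpose_of_trivial] using posDef_mul_conjTranspose_add_smul_one L hε

theorem posDef_map_ofReal_mul_transpose_add_smul_one [Fintype m] [DecidableEq m] {k : Type*}
    [Fintype k] (L : Matrix m k ℝ) {ε : ℝ} (hε : 0 < ε) :
    ((L * Lᵀ + ε • 1).map Complex.ofReal).PosDef := by
  have h : (L * Lᵀ + ε • 1).map Complex.ofReal =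
      L.map Complex.ofReal * (L.map Complex.ofReal)ᴴ + ε • 1 := by
    ext i j
    by_cases hij : i = j <;> simp [Matrix.mul_apply, conjTranspose_apply, hij]
  exact h ▸ posDef_mul_conjTranspose_add_smul_one _ hε

end Matrix

theorem stmt6 {N : ℕ} (L : Matrix (Fin N ⊕ Fin N) (Fin N ⊕ Fin N) ℝ)
    (R : Matrix (Fin N) (Fin N) ℝ) (ε : ℝ) (hε : 0 < ε)
    (M : Matrix (Fin N ⊕ Fin N) (Fin N ⊕ Fin N) ℝ)
    (hM : M = L * Lᵀ + ε • (1 : Matrix (Fin N ⊕ Fin N) (Fin N ⊕ Fin N) ℝ)) :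
    IsUnit (M.toBlocks₁₁ + M.toBlocks₂₂ + R - Rᵀ) ∧
    SchurStable ((2 : ℝ) • ((M.toBlocks₁₁ + M.toBlocks₂₂ + R - Rᵀ)⁻¹ * M.toBlocks₂₁)) := by
  set P := M.toBlocks₁₁ + M.toBlocks₂₂ + R - Rᵀ
  have hS : (R - Rᵀ)ᴴ = -(R - Rᵀ) := by
    rw [conjTranspose_eq_transpose_of_trivial, transpose_sub, transpose_transpose, neg_sub]
  have hPunit : IsUnit P := by
    simpa only [P, add_sub_assoc] using
      (hM ▸ posDef_mul_transpose_add_smul_one L hε).isUnit_toBlocks₁₁_add_toBlocks₂₂_add hS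
  refine ⟨hPunit, fun μ hμ => ?_⟩
  have hH : (M.map Complex.ofReal).PosDef := hM ▸ posDef_map_ofReal_mul_transpose_add_smul_one L hε
  have hSc : ((R - Rᵀ).map Complex.ofReal)ᴴ = -(R - Rᵀ).map Complex.ofReal := by
    ext i j
    simp [conjTranspose_apply]
  refine hH.norm_lt_one_of_mem_spectrum hSc ?_ hμ
  have hPc : P.map Complex.ofReal = (M.map Complex.ofReal).toBlocks₁₁ +
      (M.map Complex.ofReal).toBlocks₂₂ + (R - Rᵀ).map Complex.ofReal := by
    ext i j
    simp [P, toBlocks₁₁, toBlocks₂₂]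
    ring
  have hPT : P * ((2 : ℝ) • (P⁻¹ * M.toBlocks₂₁)) = (2 : ℝ) • M.toBlocks₂₁ := by
    rw [mul_smul_comm, mul_nonsing_inv_cancel_left _ _ ((isUnit_iff_isUnit_det P).1 hPunit)]
  calc _ = (P * ((2 : ℝ) • (P⁻¹ * M.toBlocks₂₁))).map Complex.ofReal := by
        rw [← hPc]
        exact (Matrix.map_mul (f := Complex.ofRealHom)).symm
    _ = (2 : ℂ) • (M.map Complex.ofReal).toBlocks₂₁ := by
        rw [hPT]
        ext i j
        simp [toBlocks₂₁]
end

section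
/- Let B ∈ ℝ^{N×m} with rank(B) = m, let B⊥ ∈ ℝ^{(N−m)×N} be a full-row-rank matrix with B⊥ B = 0, and let A ∈ ℝ^{N×N} be such that the pair (A, B) is stabilizable. Then there exist L ∈ ℝ^{2N×2N}, R ∈ ℝ^{N×N}, S ∈ ℝ^{m×N}, and ε > 0 such that, with M := L Lᵀ + ε I partitioned into N×N blocks M₁₁, M₁₂, M₂₁, M₂₂, the matrix M₁₁ + M₂₂ + R − Rᵀ is invertible and A = [B⊥; Bᵀ]⁻¹ · [2 B⊥ (M₁₁ + M₂₂ + R − Rᵀ)⁻¹ M₂₁; S]. -/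
open Matrix

/-- The `N × N` matrix obtained by stacking an `(N-m) × N` matrix on top of an `m × N` matrix
(rows reindexed to `Fin N`), assuming `m ≤ N`. -/
noncomputable def stackRows {N m : ℕ} (h : m ≤ N)
    (X : Matrix (Fin (N - m)) (Fin N) ℝ) (Y : Matrix (Fin m) (Fin N) ℝ) :
    Matrix (Fin N) (Fin N) ℝ :=
  (Matrix.fromRows X Y).submatrix
    ((finCongr (Nat.sub_add_cancel h).symm).trans finSumFinEquiv.symm) id

/-!
Let `Φ = A + B K` be Schur stable. Its spectral radius is `< 1`, so by Gelfand's formula the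
series `W = ∑ (Φᵏ)ᵀ Φᵏ` converges, to a positive definite solution of the Lyapunov equation
`Φᵀ W Φ + 1 = W`. Factoring `W = Uᵀ U`, the matrix `L = [Φᵀ Uᵀ, 0; Uᵀ, 0]` has
`L Lᵀ = [Φᵀ W Φ, Φᵀ W; W Φ, W]`, so for `ε = 1/2` and `R = 0` the blocks of `M` satisfy
`M₁₁ + M₂₂ = Φᵀ W Φ + 1 + W = 2 W` and `M₂₁ = W Φ`, whence `2 (M₁₁ + M₂₂)⁻¹ M₂₁ = Φ`.
As `B⊥ B = 0` we have `B⊥ Φ = B⊥ A`, so with `S = Bᵀ A` the right-hand side is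
`[B⊥; Bᵀ]⁻¹ [B⊥; Bᵀ] A = A`. The stacked matrix is invertible because the row spaces of `B⊥`
and `Bᵀ` are orthogonal and of complementary dimensions.
-/

open Filter NNReal

theorem eventually_norm_pow_le_of_spectralRadius_lt {A : Type*} [NormedRing A]
    [NormedAlgebra ℂ A] [CompleteSpace A] {a : A} {r : ℝ≥0} (h : spectralRadius ℂ a < r) :
    ∀ᶠ n : ℕ in atTop, ‖a ^ n‖ ≤ r ^ n := by
  filter_upwards
    [(spectrum.pow_nnnorm_pow_one_div_tendsto_nhds_spectralRadius a).eventually_lt_const h,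
      eventually_ge_atTop 1] with n hn hn1
  have hn0 : (0 : ℝ) < n := by exact_mod_cast hn1
  have hpow := ENNReal.rpow_lt_rpow hn hn0
  rw [← ENNReal.rpow_mul, one_div, inv_mul_cancel₀ hn0.ne', ENNReal.rpow_one,
    ENNReal.rpow_natCast, ← ENNReal.coe_pow, ENNReal.coe_lt_coe] at hpow
  exact_mod_cast hpow.le

open scoped Matrix.Norms.Frobenius in
theorem SchurStable.summable_transpose_pow_mul_pow {N : ℕ} {Φ : Matrix (Fin N) (Fin N) ℝ}
    (hΦ : SchurStable Φ) : Summable fun k : ℕ => (Φ ^ k)ᵀ * Φ ^ k := by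
  -- `spectralRadius_lt_of_forall_lt` needs a nonempty spectrum, which fails when `N = 0`.
  obtain _ | N := N
  · exact summable_zero.congr fun _ => Subsingleton.elim _ _
  have hρ : spectralRadius ℂ (Φ.map Complex.ofReal) < (1 : ℝ≥0) :=
    spectrum.spectralRadius_lt_of_forall_lt _ fun z hz => by
      simpa [← NNReal.coe_lt_coe] using hΦ z hz
  obtain ⟨r, hρr, hr1⟩ := ENNReal.lt_iff_exists_nnreal_btwn.mp hρ
  replace hr1 : (r : ℝ) < 1 := by exact_mod_cast hr1
  have hnorm_pow (n : ℕ) : ‖(Φ.map Complex.ofReal) ^ n‖ = ‖Φ ^ n‖ := by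
    change ‖(Φ.map Complex.ofRealHom) ^ n‖ = _
    rw [← Matrix.map_pow]
    exact frobenius_norm_map_eq _ _ Complex.norm_real
  refine Summable.of_norm_bounded_eventually_nat (summable_geometric_of_lt_one (by positivity)
    (by nlinarith [r.coe_nonneg] : (r : ℝ) ^ 2 < 1)) ?_
  filter_upwards [eventually_norm_pow_le_of_spectralRadius_lt hρr] with n hn
  rw [hnorm_pow] at hn
  calc ‖(Φ ^ n)ᵀ * Φ ^ n‖ ≤ ‖(Φ ^ n)ᵀ‖ * ‖Φ ^ n‖ := norm_mul_le _ _
    _ = ‖Φ ^ n‖ ^ 2 := by rw [frobenius_norm_transpose, sq]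
    _ ≤ ((r : ℝ) ^ n) ^ 2 := by gcongr
    _ = ((r : ℝ) ^ 2) ^ n := by ring

open scoped ComplexOrder in
theorem Matrix.isClosed_setOf_posSemidef {𝕜 n : Type*} [RCLike 𝕜] [Fintype n] :
    IsClosed {A : Matrix n n 𝕜 | A.PosSemidef} := by
  simp_rw [posSemidef_iff_dotProduct_mulVec, Set.ofPred_and, Set.ofPred_forall]
  refine (isClosed_eq continuous_id.matrix_conjTranspose continuous_id).inter
    (isClosed_iInter fun x => isClosed_le continuous_const ?_)
  exact continuous_const.dotProduct (continuous_id.matrix_mulVec continuous_const)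

theorem SchurStable.exists_posDef_lyapunov {N : ℕ} {Φ : Matrix (Fin N) (Fin N) ℝ}
    (hΦ : SchurStable Φ) : ∃ W : Matrix (Fin N) (Fin N) ℝ, W.PosDef ∧ Φᵀ * W * Φ + 1 = W := by
  obtain ⟨W, hsum⟩ := hΦ.summable_transpose_pow_mul_pow
  have hW : W.PosSemidef :=
    isClosed_setOf_posSemidef.mem_of_tendsto hsum <| Eventually.of_forall fun s =>
      posSemidef_sum s fun k _ => by simpa using posSemidef_conjTranspose_mul_self (Φ ^ k)
  have hshift : HasSum (fun k : ℕ => (Φ ^ (k + 1))ᵀ * Φ ^ (k + 1)) (Φᵀ * W * Φ) := by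
    simpa only [pow_succ, transpose_mul, Matrix.mul_assoc] using (hsum.mul_left Φᵀ).mul_right Φ
  have hlyap : Φᵀ * W * Φ + 1 = W := by
    have htail := ((hasSum_nat_add_iff' 1).mpr hsum).unique hshift
    simp only [Finset.range_one, Finset.sum_singleton, pow_zero, transpose_one, one_mul] at htail
    rw [← htail, sub_add_cancel]
  refine ⟨W, ?_, hlyap⟩
  rw [← hlyap, ← conjTranspose_eq_transpose_of_trivial]
  exact PosDef.posSemidef_add (hW.conjTranspose_mul_mul_same Φ) PosDef.one

open scoped MatrixOrder in
theorem Matrix.PosSemidef.exists_mul_transpose_eq_fromBlocks {n : Type*} [Fintype n]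
    [DecidableEq n] {W : Matrix n n ℝ} (hW : W.PosSemidef) (Φ : Matrix n n ℝ) :
    ∃ L : Matrix (n ⊕ n) (n ⊕ n) ℝ, L * Lᵀ = fromBlocks (Φᵀ * W * Φ) (Φᵀ * W) (W * Φ) W := by
  obtain ⟨U, rfl⟩ := CStarAlgebra.nonneg_iff_eq_star_mul_self.mp hW.nonneg
  refine ⟨fromBlocks (Φᵀ * Uᵀ) 0 Uᵀ 0, ?_⟩
  simp [fromBlocks_transpose, fromBlocks_multiply, Matrix.mul_assoc, star_eq_conjTranspose]

theorem Matrix.disjoint_span_row_of_mul_transpose_eq_zero {R k l n : Type*} [Field R]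
    [LinearOrder R] [IsStrictOrderedRing R] [Fintype k] [Fintype l] [Fintype n]
    {X : Matrix k n R} {Y : Matrix l n R} (h : X * Yᵀ = 0) :
    Disjoint (Submodule.span R (Set.range X.row)) (Submodule.span R (Set.range Y.row)) := by
  simp_rw [Submodule.disjoint_def, ← range_vecMulLinear]
  rintro _ ⟨x, rfl⟩ ⟨y, hy⟩
  simp only [vecMulLinear_apply] at hy ⊢
  refine dotProduct_self_eq_zero.mp ?_
  calc x ᵥ* X ⬝ᵥ x ᵥ* X = x ᵥ* X ⬝ᵥ Yᵀ *ᵥ y := by rw [mulVec_transpose, hy]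
    _ = x ᵥ* (X * Yᵀ) ⬝ᵥ y := by rw [dotProduct_mulVec, vecMul_vecMul]
    _ = 0 := by rw [h, vecMul_zero, zero_dotProduct]

theorem stackRows_mul {N m : ℕ} (h : m ≤ N) (X : Matrix (Fin (N - m)) (Fin N) ℝ)
    (Y : Matrix (Fin m) (Fin N) ℝ) (A : Matrix (Fin N) (Fin N) ℝ) :
    stackRows h X Y * A = stackRows h (X * A) (Y * A) := by
  rw [stackRows, stackRows, ← fromRows_mul]
  rfl

theorem range_row_stackRows {N m : ℕ} (h : m ≤ N) (X : Matrix (Fin (N - m)) (Fin N) ℝ)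
    (Y : Matrix (Fin m) (Fin N) ℝ) :
    Set.range (stackRows h X Y).row = Set.range X.row ∪ Set.range Y.row :=
  ((Equiv.surjective _).range_comp (fromRows X Y)).trans (Set.Sum.elim_range X Y)

theorem isUnit_stackRows {N m : ℕ} (h : m ≤ N) {X : Matrix (Fin (N - m)) (Fin N) ℝ}
    {Y : Matrix (Fin m) (Fin N) ℝ} (hX : X.rank = N - m) (hY : Y.rank = m) (hXY : X * Yᵀ = 0) :
    IsUnit (stackRows h X Y) := by
  refine vecMul_surjective_iff_isUnit.mp ((LinearMap.range_eq_top (f := vecMulLinear _)).mp ?_)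
  rw [range_vecMulLinear, range_row_stackRows, Submodule.span_union]
  apply Submodule.eq_top_of_finrank_eq
  have hsum := Submodule.finrank_sup_add_finrank_inf_eq (Submodule.span ℝ (Set.range X.row))
    (Submodule.span ℝ (Set.range Y.row))
  rw [disjoint_iff.mp (disjoint_span_row_of_mul_transpose_eq_zero hXY), finrank_bot, add_zero,
    ← rank_eq_finrank_span_row, ← rank_eq_finrank_span_row, hX, hY] at hsum
  rw [hsum, Module.finrank_fin_fun]
  omega

theorem stmt14 {N m : ℕ} (hm : m ≤ N)
    (B : Matrix (Fin N) (Fin m) ℝ) (hB : B.rank = m)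
    (Bp : Matrix (Fin (N - m)) (Fin N) ℝ) (hBp : Bp.rank = N - m)
    (hann : Bp * B = 0)
    (A : Matrix (Fin N) (Fin N) ℝ)
    (hstab : ∃ K : Matrix (Fin m) (Fin N) ℝ, SchurStable (A + B * K)) :
    ∃ (L : Matrix (Fin N ⊕ Fin N) (Fin N ⊕ Fin N) ℝ)
      (R : Matrix (Fin N) (Fin N) ℝ) (S : Matrix (Fin m) (Fin N) ℝ) (ε : ℝ), 0 < ε ∧
      ∀ M : Matrix (Fin N ⊕ Fin N) (Fin N ⊕ Fin N) ℝ,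
        M = L * Lᵀ + ε • (1 : Matrix (Fin N ⊕ Fin N) (Fin N ⊕ Fin N) ℝ) →
        IsUnit (M.toBlocks₁₁ + M.toBlocks₂₂ + R - Rᵀ) ∧
        A = (stackRows hm Bp Bᵀ)⁻¹ *
          stackRows hm
            ((2 : ℝ) • (Bp * ((M.toBlocks₁₁ + M.toBlocks₂₂ + R - Rᵀ)⁻¹ * M.toBlocks₂₁))) S := by
  obtain ⟨K, hK⟩ := hstab
  set Φ := A + B * K
  obtain ⟨W, hW, hlyap⟩ := hK.exists_posDef_lyapunov
  obtain ⟨L, hL⟩ := hW.posSemidef.exists_mul_transpose_eq_fromBlocks Φ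
  have h2W : IsUnit ((2 : ℝ) • W).det := (isUnit_iff_isUnit_det _).mp (hW.smul two_pos).isUnit
  have hstack : IsUnit (stackRows hm Bp Bᵀ).det := (isUnit_iff_isUnit_det _).mp <|
    isUnit_stackRows hm hBp (by rwa [rank_transpose]) (by rwa [transpose_transpose])
  have hBpΦ : Bp * Φ = Bp * A := by
    rw [Matrix.mul_add, ← Matrix.mul_assoc, hann, Matrix.zero_mul, add_zero]
  refine ⟨L, 0, Bᵀ * A, 1 / 2, by norm_num, ?_⟩
  rintro M rfl
  have hM : L * Lᵀ + (1 / 2 : ℝ) • 1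
      = fromBlocks (Φᵀ * W * Φ + (1 / 2 : ℝ) • 1) (Φᵀ * W) (W * Φ) (W + (1 / 2 : ℝ) • 1) := by
    rw [hL, ← fromBlocks_one, fromBlocks_smul, fromBlocks_add]
    simp
  have hdiag : Φᵀ * W * Φ + (1 / 2 : ℝ) • 1 + (W + (1 / 2 : ℝ) • 1) + 0 - 0ᵀ = (2 : ℝ) • W := by
    rw [transpose_zero]
    linear_combination (norm := module) hlyap
  have hhalf : ((2 : ℝ) • W)⁻¹ * (W * Φ) = (1 / 2 : ℝ) • Φ := by
    rw [← nonsing_inv_mul_cancel_left ((2 : ℝ) • W) ((1 / 2 : ℝ) • Φ) h2W, smul_mul_smul_comm]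
    norm_num
  rw [hM, toBlocks_fromBlocks₁₁, toBlocks_fromBlocks₂₂, toBlocks_fromBlocks₂₁, hdiag, hhalf,
    Matrix.mul_smul, smul_smul, mul_one_div_cancel two_ne_zero, one_smul, hBpΦ, ← stackRows_mul,
    nonsing_inv_mul_cancel_left _ _ hstack]
  exact ⟨(isUnit_iff_isUnit_det _).mpr h2W, rfl⟩
end
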